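/- Let K be a field of characteristic 0, V a finite-dimensional K((t))-vector space, and D a connection on V such that (V, D) is irreducible. If D : V → V is not bijective, then V is one-dimensional over K((t)) and admits a basis vector e with D(e) = 0; that is, (V, D) is isomorphic to the trivial rank-one connection (K((t)), f ↦ f′). Equivalently, every nontrivial irreducible connection over K((t)) has vanishing de Rham cohomology. -/

import Mathlib

noncomputable def lder {K : Type*} [Field K] (f : LaurentSeries K) : LaurentSeries K where
  coeff n := (n + 1 : ℤ) • f.coeff (n + 1)
  isPWO_support' := by
    have hmono : Monotone (fun m : ℤ => m - 1) := fun a b hab => by simpa using hab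
    have h : (Function.support fun n : ℤ => (n + 1 : ℤ) • f.coeff (n + 1)) ⊆
        (fun m : ℤ => m - 1) '' (Function.support f.coeff) := by
      intro n hn
      refine ⟨n + 1, fun h0 => ?_, by ring⟩
      simp [Function.mem_support, h0] at hn
    exact (f.isPWO_support'.image_of_monotoneOn (hmono.monotoneOn _)).mono h

/-!
If `D v = 0` for some `v ≠ 0`, the line `K⸨X⸩ ∙ v` is `D`-stable, hence all of `V`. Otherwise `D`
is injective but not surjective. A cyclic vector `w₀, D w₀, …, D^m w₀` turns `D v = ∑ gᵢ • Dⁱ w₀`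
into a scalar differential equation, which is solvable for right-hand sides of large order
because its indicial polynomial has only finitely many integer roots; so `range D` contains a
lattice. Hence a `K`-linear `φ` killing `range D` but not `w₀` is `t`-adically continuous,
and `ψ w = ∑ₙ φ (t ^ (-n - 1) • w) tⁿ` is a nonzero `K⸨X⸩`-linear map `V → K⸨X⸩` with
`ψ ∘ D = lder ∘ ψ`. Its kernel is `D`-stable, so `ψ` is an isomorphism and `ψ⁻¹ 1` is a
horizontal generator.
-/

open HahnSeries

namespace LaurentSeries

section Ring

variable {R : Type*} [Ring R]

/-- The lattice `t ^ n • R⟦X⟧` of `R⸨X⸩`. -/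
def orderTopGE (n : ℤ) : AddSubgroup (LaurentSeries R) where
  carrier := {x | (n : WithTop ℤ) ≤ x.orderTop}
  zero_mem' := by simp
  add_mem' hx hy := by
    simp only [Set.mem_ofPred_eq] at *
    exact le_trans (le_min hx hy) min_orderTop_le_orderTop_add
  neg_mem' hx := by simpa only [Set.mem_ofPred_eq, orderTop_neg] using hx

theorem mem_orderTopGE {n : ℤ} {x : LaurentSeries R} :
    x ∈ orderTopGE n ↔ (n : WithTop ℤ) ≤ x.orderTop :=
  Iff.rfl

theorem coeff_eq_zero_of_mem_orderTopGE {n k : ℤ} {x : LaurentSeries R}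
    (hx : x ∈ orderTopGE n) (hk : k < n) : x.coeff k = 0 :=
  le_orderTop_iff_forall.mp hx k (WithTop.coe_lt_coe.mpr hk)

theorem mem_orderTopGE_iff_forall {n : ℤ} {x : LaurentSeries R} :
    x ∈ orderTopGE n ↔ ∀ k < n, x.coeff k = 0 := by
  rw [mem_orderTopGE, le_orderTop_iff_forall]
  exact forall_congr' fun k => by rw [WithTop.coe_lt_coe]

theorem orderTopGE_antitone : Antitone (orderTopGE (R := R)) :=
  fun _ _ hmn _ hx => le_trans (WithTop.coe_le_coe.mpr hmn) hx

theorem exists_mem_orderTopGE (x : LaurentSeries R) : ∃ n, x ∈ orderTopGE n := by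
  rcases eq_or_ne x 0 with rfl | hx
  · exact ⟨0, zero_mem _⟩
  · exact ⟨x.order, (order_eq_orderTop_of_ne_zero hx).le⟩

theorem eq_zero_of_forall_mem_orderTopGE {x : LaurentSeries R}
    (hx : ∀ n, x ∈ orderTopGE n) : x = 0 := by
  ext k
  exact coeff_eq_zero_of_mem_orderTopGE (hx (k + 1)) (lt_add_one k)

theorem single_mem_orderTopGE {n m : ℤ} (h : n ≤ m) (r : R) :
    single m r ∈ orderTopGE n :=
  le_trans (WithTop.coe_le_coe.mpr h) orderTop_single_le

theorem mul_mem_orderTopGE {m n : ℤ} {x y : LaurentSeries R} (hx : x ∈ orderTopGE m)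
    (hy : y ∈ orderTopGE n) : x * y ∈ orderTopGE (m + n) := by
  rw [mem_orderTopGE, WithTop.coe_add]
  exact le_trans (add_le_add hx hy) orderTop_add_le_mul

theorem truncLT_eq_sum_single {a : ℤ} {f : LaurentSeries R}
    (hf : f ∈ orderTopGE a) (k : ℤ) :
    truncLT k f = ∑ j ∈ Finset.Ico a k, single j (f.coeff j) := by
  ext m
  rw [HahnSeries.coeff_truncLT, HahnSeries.coeff_sum]
  by_cases hmem : m ∈ Finset.Ico a k
  · rw [Finset.sum_eq_single_of_mem m hmem fun j _ hjm => coeff_single_of_ne hjm.symm,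
      coeff_single_same, if_pos (Finset.mem_Ico.mp hmem).2]
  · rw [Finset.sum_eq_zero fun j hj => coeff_single_of_ne <| by rintro rfl; exact hmem hj]
    rw [Finset.mem_Ico, not_and_or, not_le, not_lt] at hmem
    rcases hmem with hma | hkm
    · rw [coeff_eq_zero_of_mem_orderTopGE hf hma, ite_self]
    · rw [if_neg (not_lt.mpr hkm)]

theorem sub_truncLT_mem_orderTopGE (f : LaurentSeries R) (k : ℤ) :
    f - truncLT k f ∈ orderTopGE k :=
  mem_orderTopGE_iff_forall.mpr fun m hm => by simp [hm]

theorem exists_limit (s : ℕ → LaurentSeries R) (N : ℤ)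
    (hs : ∀ d : ℕ, s (d + 1) - s d ∈ orderTopGE (N + d)) :
    ∃ h : LaurentSeries R, ∀ d : ℕ, h - s d ∈ orderTopGE (N + d) := by
  have cauchy : ∀ d d' : ℕ, d ≤ d' → s d' - s d ∈ orderTopGE (N + d) := by
    intro d d' hdd'
    induction d', hdd' using Nat.le_induction with
    | base => simp
    | succ d' hdd' ih =>
      rw [← sub_add_sub_cancel]
      exact add_mem (orderTopGE_antitone (by omega) (hs d')) ih
  obtain ⟨a, ha⟩ := exists_mem_orderTopGE (s 0)
  let F : ℤ → R := fun m => (s (m - N + 1).toNat).coeff m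
  have hF : ∀ m < min N a, F m = 0 := fun m hm => by
    simp only [F, show (m - N + 1).toNat = 0 by omega]
    exact coeff_eq_zero_of_mem_orderTopGE ha (by omega)
  refine ⟨ofSuppBddBelow F ⟨min N a, fun m hm => not_lt.mp fun h => hm (hF m h)⟩, fun d => ?_⟩
  rw [mem_orderTopGE_iff_forall]
  intro m hm
  have hdm : (m - N + 1).toNat ≤ d := by omega
  have hagree := coeff_eq_zero_of_mem_orderTopGE (cauchy _ _ hdm)
    (show m < N + (m - N + 1).toNat by omega)
  rw [coeff_sub] at hagree ⊢
  exact sub_eq_zero.mpr (sub_eq_zero.mp hagree).symm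

theorem exists_shift_mem_orderTopGE {ι : Type*} {s : Finset ι} {c : ι → LaurentSeries R}
    (w : ι → ℤ) (hc : ∃ i ∈ s, c i ≠ 0) :
    ∃ p : ℤ, (∀ i ∈ s, c i ∈ orderTopGE (w i - p)) ∧ ∃ i ∈ s, (c i).coeff (w i - p) ≠ 0 := by
  classical
  obtain ⟨i₀, hi₀, hci₀⟩ := hc
  let S := s.filter fun i => c i ≠ 0
  have hS : S.Nonempty := ⟨i₀, Finset.mem_filter.mpr ⟨hi₀, hci₀⟩⟩
  refine ⟨S.sup' hS fun i => w i - (c i).order, fun i hi => ?_, ?_⟩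
  · rcases eq_or_ne (c i) 0 with hci | hci
    · rw [hci]; exact zero_mem _
    · have hle := S.le_sup' (fun i => w i - (c i).order) (Finset.mem_filter.mpr ⟨hi, hci⟩)
      rw [mem_orderTopGE, ← order_eq_orderTop_of_ne_zero hci, WithTop.coe_le_coe]
      omega
  · obtain ⟨i, hiS, hi⟩ := S.exists_mem_eq_sup' hS fun i => w i - (c i).order
    have hci := (Finset.mem_filter.mp hiS).2
    refine ⟨i, (Finset.mem_filter.mp hiS).1, ?_⟩
    rw [hi, sub_sub_cancel]
    exact mt coeff_order_eq_zero.mp hci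

end Ring

/-- Successive approximation: each step kills the lowest remaining coefficient of `u - L h`. -/
theorem exists_eq_of_leading_ne_zero {K : Type*} [Field K] (L : LaurentSeries K →+ LaurentSeries K)
    (p N : ℤ) (Q : ℤ → K) (hL : ∀ (k : ℤ) x, x ∈ orderTopGE k → L x ∈ orderTopGE (k - p))
    (hlead : ∀ m a, (L (single m a)).coeff (m - p) = Q m * a)
    (hQ : ∀ m, N ≤ m → Q m ≠ 0) {u : LaurentSeries K} (hu : u ∈ orderTopGE (N - p)) :
    ∃ h, L h = u := by
  let step (d : ℕ) (x : LaurentSeries K) : LaurentSeries K :=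
    single (N + d) ((u - L x).coeff (N + d - p) / Q (N + d))
  let s : ℕ → LaurentSeries K := fun d => Nat.rec 0 (fun d x => x + step d x) d
  have hs : ∀ d, s (d + 1) = s d + step d (s d) := fun _ => rfl
  have residual : ∀ d : ℕ, u - L (s d) ∈ orderTopGE (N + d - p) := by
    intro d
    induction d with
    | zero => simpa [s] using hu
    | succ d ih =>
      rw [mem_orderTopGE_iff_forall]
      intro k hk
      rw [hs, map_add, ← sub_sub, coeff_sub]
      rcases lt_or_eq_of_le (show k ≤ N + d - p by omega) with hk | rfl
      · rw [coeff_eq_zero_of_mem_orderTopGE ih hk,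
          coeff_eq_zero_of_mem_orderTopGE (hL _ _ (single_mem_orderTopGE le_rfl _)) hk, sub_zero]
      · rw [hlead, mul_div_cancel₀ _ (hQ _ (by omega)), sub_self]
  obtain ⟨h, hh⟩ := exists_limit s N fun d => by
    rw [hs, add_sub_cancel_left]
    exact single_mem_orderTopGE le_rfl _
  refine ⟨h, (sub_eq_zero.mp (eq_zero_of_forall_mem_orderTopGE fun n => ?_)).symm⟩
  have key : u - L h = (u - L (s (n + p - N).toNat)) - L (h - s (n + p - N).toNat) := by
    rw [map_sub]; abel
  rw [key]
  refine orderTopGE_antitone (show n ≤ N + (n + p - N).toNat - p by omega)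
    (sub_mem (residual _) ?_)
  exact hL _ _ (hh _)

end LaurentSeries

section Derivative

open LaurentSeries

variable {K : Type*} [Field K]

@[simp]
theorem lder_coeff (f : LaurentSeries K) (n : ℤ) :
    (lder f).coeff n = (n + 1 : ℤ) • f.coeff (n + 1) :=
  rfl

theorem lder_add (f g : LaurentSeries K) : lder (f + g) = lder f + lder g := by
  ext n
  simp [smul_add]

theorem lder_sum {ι : Type*} (s : Finset ι) (f : ι → LaurentSeries K) :
    lder (∑ i ∈ s, f i) = ∑ i ∈ s, lder (f i) :=
  map_sum (AddMonoidHom.mk' lder lder_add) f s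

@[simp]
theorem lder_zero : lder (0 : LaurentSeries K) = 0 := by
  ext n
  simp

theorem lder_single (k : ℤ) (a : K) : lder (single k a) = single (k - 1) (k * a) := by
  ext n
  rcases eq_or_ne n (k - 1) with rfl | hn
  · simp
  · have : n + 1 ≠ k := fun h => hn (by omega)
    simp [coeff_single_of_ne hn, coeff_single_of_ne this]

@[simp]
theorem lder_one : lder (1 : LaurentSeries K) = 0 := by
  rw [← single_zero_one, lder_single]
  simp

theorem coeff_single_one_mul_lder (f : LaurentSeries K) (n : ℤ) :
    (single 1 1 * lder f).coeff n = n • f.coeff n := by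
  rw [← sub_add_cancel n 1, coeff_single_mul_add, one_mul, lder_coeff, sub_add_cancel]

/-- `t • lder` is the Euler operator `n • f.coeff n`, whose Leibniz rule holds termwise on
each antidiagonal. -/
theorem lder_mul (f g : LaurentSeries K) : lder (f * g) = lder f * g + f * lder g := by
  have hsupp : ∀ x : LaurentSeries K, (single 1 1 * lder x).support ⊆ x.support := by
    intro x n hn
    rw [mem_support, coeff_single_one_mul_lder] at hn
    exact right_ne_zero_of_smul hn
  have euler : single 1 1 * lder (f * g) =
      (single 1 1 * lder f) * g + f * (single 1 1 * lder g) := by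
    ext n
    rw [coeff_add, coeff_mul_left' f.isPWO_support (hsupp f),
      coeff_mul_right' g.isPWO_support (hsupp g), coeff_single_one_mul_lder, coeff_mul,
      Finset.smul_sum, ← Finset.sum_add_distrib]
    refine Finset.sum_congr rfl fun ij hij => ?_
    rw [Finset.mem_antidiagonal] at hij
    rw [coeff_single_one_mul_lder, coeff_single_one_mul_lder, smul_mul_assoc, mul_smul_comm,
      ← add_smul, hij.2.2]
  have hne : (single 1 1 : LaurentSeries K) ≠ 0 := single_ne_zero one_ne_zero
  exact mul_left_cancel₀ hne (by rw [euler]; ring)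

theorem iterate_lder_add (i : ℕ) (f g : LaurentSeries K) :
    lder^[i] (f + g) = lder^[i] f + lder^[i] g := by
  induction i with
  | zero => rfl
  | succ i ih => simp only [Function.iterate_succ_apply', ih, lder_add]

theorem iterate_lder_single (i : ℕ) (m : ℤ) (a : K) :
    lder^[i] (single m a) = single (m - i) ((descPochhammer K i).eval (m : K) * a) := by
  induction i with
  | zero => simp
  | succ i ih =>
    rw [Function.iterate_succ_apply', ih, lder_single, descPochhammer_succ_eval]
    congr 1
    · congr 1; omega
    · push_cast; ring

theorem lder_mem_orderTopGE {n : ℤ} {f : LaurentSeries K} (hf : f ∈ orderTopGE n) :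
    lder f ∈ orderTopGE (n - 1) := by
  rw [mem_orderTopGE_iff_forall] at hf ⊢
  intro k hk
  rw [lder_coeff, hf (k + 1) (by omega), smul_zero]

theorem iterate_lder_mem_orderTopGE {n : ℤ} {f : LaurentSeries K} (hf : f ∈ orderTopGE n)
    (i : ℕ) : lder^[i] f ∈ orderTopGE (n - i) := by
  induction i with
  | zero => simpa using hf
  | succ i ih =>
    rw [Function.iterate_succ_apply']
    convert lder_mem_orderTopGE ih using 2
    push_cast; ring

end Derivative

section DifferentialOperator

open LaurentSeries Polynomial

theorem Polynomial.sum_C_mul_descPochhammer_ne_zero {R : Type*} [Ring R] [IsDomain R] {s : Finset ℕ}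
    {a : ℕ → R} (ha : ∃ i ∈ s, a i ≠ 0) :
    ∑ i ∈ s, C (a i) * descPochhammer R i ≠ 0 := by
  obtain ⟨i, hi, hai⟩ := ha
  have hdeg : ∀ j, C (a j) * descPochhammer R j ≠ 0 →
      (C (a j) * descPochhammer R j).degree = j := by
    intro j hj
    have haj : a j ≠ 0 := fun h => hj (by rw [h, C_0, zero_mul])
    rw [degree_C_mul haj, degree_eq_natDegree (monic_descPochhammer R j).ne_zero,
      descPochhammer_natDegree]
  have hterm : C (a i) * descPochhammer R i ≠ 0 :=
    mul_ne_zero (C_ne_zero.mpr hai) (monic_descPochhammer R i).ne_zero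
  intro hsum
  have hsup := degree_sum_eq_of_disjoint (fun j => C (a j) * descPochhammer R j) s
    fun j hj k hk hjk => by
      simp only [Function.onFun, Function.comp_apply, hdeg j hj.2, hdeg k hk.2]
      exact_mod_cast hjk
  rw [hsum, degree_zero, eq_comm, Finset.sup_eq_bot_iff] at hsup
  have hi_bot := hsup i hi
  rw [hdeg i hterm] at hi_bot
  exact WithBot.coe_ne_bot hi_bot

variable {K : Type*} [Field K]

noncomputable def diffOp (c : ℕ → LaurentSeries K) (n : ℕ) (h : LaurentSeries K) :
    LaurentSeries K :=
  ∑ i ∈ Finset.range (n + 1), c i * lder^[i] h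

def IsDiffOp (L : LaurentSeries K → LaurentSeries K) (n : ℕ) : Prop :=
  ∃ c : ℕ → LaurentSeries K, c n ≠ 0 ∧ L = diffOp c n

noncomputable def indicialPoly (c : ℕ → LaurentSeries K) (n : ℕ) (p : ℤ) : K[X] :=
  ∑ i ∈ Finset.range (n + 1), C ((c i).coeff (i - p)) * descPochhammer K i

theorem diffOp_add (c : ℕ → LaurentSeries K) (n : ℕ) (x y : LaurentSeries K) :
    diffOp c n (x + y) = diffOp c n x + diffOp c n y := by
  simp only [diffOp, iterate_lder_add, mul_add, Finset.sum_add_distrib]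

theorem diffOp_mem_orderTopGE {c : ℕ → LaurentSeries K} {n : ℕ} {p k : ℤ}
    (hc : ∀ i ≤ n, c i ∈ orderTopGE (i - p)) {x : LaurentSeries K} (hx : x ∈ orderTopGE k) :
    diffOp c n x ∈ orderTopGE (k - p) := by
  refine sum_mem fun i hi => ?_
  have hterm := mul_mem_orderTopGE (hc i (by simpa [Nat.lt_succ_iff] using hi))
    (iterate_lder_mem_orderTopGE hx i)
  rwa [show (i : ℤ) - p + (k - i) = k - p by ring] at hterm

theorem coeff_diffOp_single (c : ℕ → LaurentSeries K) (n : ℕ) (p m : ℤ) (a : K) :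
    (diffOp c n (single m a)).coeff (m - p) = (indicialPoly c n p).eval (m : K) * a := by
  simp only [diffOp, indicialPoly, HahnSeries.coeff_sum, eval_finsetSum, Finset.sum_mul]
  refine Finset.sum_congr rfl fun i _ => ?_
  rw [iterate_lder_single, show m - p = (i - p) + (m - i) by ring, coeff_mul_single_add]
  simp only [eval_mul, eval_C]
  ring

theorem IsDiffOp.exists_orderTopGE_subset_range [CharZero K]
    {L : LaurentSeries K → LaurentSeries K} {n : ℕ} (hL : IsDiffOp L n) :
    ∃ N : ℤ, (orderTopGE (R := K) N : Set (LaurentSeries K)) ⊆ Set.range L := by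
  obtain ⟨c, hcn, rfl⟩ := hL
  obtain ⟨p, hp, hpc⟩ := exists_shift_mem_orderTopGE (s := Finset.range (n + 1)) (c := c)
    (fun i => i) ⟨n, Finset.self_mem_range_succ n, hcn⟩
  have hQ : indicialPoly c n p ≠ 0 := sum_C_mul_descPochhammer_ne_zero hpc
  obtain ⟨B, hB⟩ := ((Polynomial.finite_setOfPred_isRoot hQ).preimage
    Int.cast_injective.injOn).bddAbove
  refine ⟨B + 1 - p, fun u hu => exists_eq_of_leading_ne_zero
    ⟨⟨diffOp c n, by simp [diffOp, Function.iterate_fixed lder_zero]⟩, diffOp_add c n⟩ p (B + 1) _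
    (fun k x hx => diffOp_mem_orderTopGE (fun i hi => hp i (by simpa [Nat.lt_succ_iff])) hx)
    (coeff_diffOp_single c n p) (fun m hm hroot => ?_) hu⟩
  have hmB := hB (show m ∈ Int.cast ⁻¹' {x : K | (indicialPoly c n p).IsRoot x} from hroot)
  omega

theorem isDiffOp_id : IsDiffOp (id : LaurentSeries K → LaurentSeries K) 0 :=
  ⟨fun _ => 1, one_ne_zero, funext fun h => by simp [diffOp]⟩

theorem IsDiffOp.neg {L : LaurentSeries K → LaurentSeries K} {n : ℕ} (hL : IsDiffOp L n) :
    IsDiffOp (fun h => -L h) n := by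
  obtain ⟨c, hcn, rfl⟩ := hL
  exact ⟨fun i => -c i, neg_ne_zero.mpr hcn, funext fun h => by simp [diffOp]⟩

theorem IsDiffOp.lder_add_mul {L : LaurentSeries K → LaurentSeries K} {n : ℕ}
    (hL : IsDiffOp L n) (b : LaurentSeries K) :
    IsDiffOp (fun h => lder (L h) + b * h) (n + 1) := by
  classical
  obtain ⟨c, hcn, rfl⟩ := hL
  refine ⟨fun i => (if i ≤ n then lder (c i) else 0) + (if i = 0 then b else c (i - 1)),
    by simpa using hcn, funext fun h => ?_⟩
  simp only [diffOp, add_mul, Finset.sum_add_distrib, lder_sum, lder_mul,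
    ← Function.iterate_succ_apply' lder]
  rw [Finset.sum_range_succ _ (n + 1), Finset.sum_range_succ' _ (n + 1)]
  simp only [ite_mul, zero_mul, if_neg (Nat.not_succ_le_self n), add_zero, Nat.succ_ne_zero,
    if_false, if_true, Nat.add_sub_cancel, Function.iterate_zero, id]
  rw [Finset.sum_congr rfl fun i hi => if_pos (Nat.lt_succ_iff.mp (Finset.mem_range.mp hi))]
  abel

end DifferentialOperator

section BackSubstitution

open LaurentSeries

variable {K : Type*} [Field K]

/-- The coefficient of `e (m - j)` in the solution `v = ∑ fᵢ • eᵢ` of `D v = ∑ gᵢ • eᵢ` with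
`f m = h`, for a cyclic basis `e (i + 1) = D (e i)`, `D (e m) = ∑ bᵢ • eᵢ`
(see `map_sum_smul_of_companion`). -/
noncomputable def backSubst (g b : ℕ → LaurentSeries K) (m : ℕ) (h : LaurentSeries K) :
    ℕ → LaurentSeries K
  | 0 => h
  | j + 1 => g (m - j) - lder (backSubst g b m h j) - b (m - j) * h

theorem backSubst_eq_add (g b : ℕ → LaurentSeries K) (m : ℕ) (h : LaurentSeries K) (j : ℕ) :
    backSubst g b m h j = backSubst 0 b m h j + backSubst g b m 0 j := by
  induction j with
  | zero => simp [backSubst]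
  | succ j ih =>
    simp only [backSubst]
    rw [ih, lder_add, Pi.zero_apply, mul_zero]
    ring

theorem isDiffOp_backSubst (b : ℕ → LaurentSeries K) (m j : ℕ) :
    IsDiffOp (fun h => backSubst 0 b m h j) j := by
  induction j with
  | zero => exact isDiffOp_id
  | succ j ih =>
    convert (ih.lder_add_mul (b (m - j))).neg using 2 with h
    simp only [backSubst, Pi.zero_apply]
    ring

theorem backSubst_zero_mem_orderTopGE {g : ℕ → LaurentSeries K} {N : ℤ} {m : ℕ}
    (hg : ∀ i ≤ m, g i ∈ orderTopGE N) (b : ℕ → LaurentSeries K) (j : ℕ) :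
    backSubst g b m 0 j ∈ orderTopGE (N - j) := by
  induction j with
  | zero => exact zero_mem _
  | succ j ih =>
    rw [backSubst, mul_zero, sub_zero]
    refine sub_mem (orderTopGE_antitone (by omega) (hg _ (Nat.sub_le m j))) ?_
    convert lder_mem_orderTopGE ih using 2
    push_cast; ring

end BackSubstitution

section Connection

open LaurentSeries Finset

variable {K : Type*} [Field K] {V : Type*} [AddCommGroup V] [Module (LaurentSeries K) V]
  [Module K V]

def IsConnection (D : V →ₗ[K] V) : Prop :=
  ∀ (f : LaurentSeries K) (v : V), D (f • v) = lder f • v + f • D v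

def IsIrreducibleFor (D : V →ₗ[K] V) : Prop :=
  ∀ W : Submodule (LaurentSeries K) V, (∀ v ∈ W, D v ∈ W) → W = ⊥ ∨ W = ⊤

variable {D : V →ₗ[K] V}

theorem exists_eq_smul_of_horizontal (hD : IsConnection D) (hirr : IsIrreducibleFor D) {v : V}
    (hv : v ≠ 0) (hDv : D v = 0) (w : V) : ∃ f : LaurentSeries K, w = f • v := by
  have hstable : ∀ x ∈ LaurentSeries K ∙ v, D x ∈ LaurentSeries K ∙ v := by
    intro x hx
    obtain ⟨f, rfl⟩ := Submodule.mem_span_singleton.mp hx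
    rw [hD, hDv, smul_zero, add_zero]
    exact Submodule.smul_mem _ _ (Submodule.mem_span_singleton_self v)
  rcases hirr _ hstable with hbot | htop
  · exact absurd (Submodule.span_singleton_eq_bot.mp hbot) hv
  · obtain ⟨f, hf⟩ := Submodule.mem_span_singleton.mp (htop ▸ Submodule.mem_top : w ∈ _)
    exact ⟨f, hf.symm⟩

theorem exists_horizontal_generator (hirr : IsIrreducibleFor D)
    (ψ : V →ₗ[LaurentSeries K] LaurentSeries K) (hψ : ψ ≠ 0)
    (hψD : ∀ w, ψ (D w) = lder (ψ w)) :
    ∃ e : V, e ≠ 0 ∧ D e = 0 ∧ ∀ v : V, ∃ f : LaurentSeries K, v = f • e := by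
  have hinj : Function.Injective ψ := by
    refine LinearMap.ker_eq_bot.mp ((hirr _ fun v hv => ?_).resolve_right
      fun htop => hψ (LinearMap.ker_eq_top.mp htop))
    rw [LinearMap.mem_ker] at hv ⊢
    rw [hψD, hv, lder_zero]
  obtain ⟨e, he⟩ : ∃ e, ψ e = 1 := LinearMap.range_eq_top.mp
    ((Ideal.eq_bot_or_top _).resolve_left fun h => hψ (LinearMap.range_eq_bot.mp h)) 1
  refine ⟨e, fun h0 => by simp [h0] at he, hinj (by rw [hψD, he, lder_one, map_zero]),
    fun v => ⟨ψ v, hinj ?_⟩⟩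
  rw [map_smul, he, smul_eq_mul, mul_one]

theorem exists_span_iterate [Module.Finite (LaurentSeries K) V] (hD : IsConnection D)
    (hirr : IsIrreducibleFor D) {v₀ : V} (hv₀ : v₀ ≠ 0) :
    ∃ m : ℕ, ∀ w : V, ∃ g : ℕ → LaurentSeries K, w = ∑ i ∈ range (m + 1), g i • D^[i] v₀ := by
  let W : ℕ → Submodule (LaurentSeries K) V := fun i => LaurentSeries K ∙ D^[i] v₀
  have hW : ∀ i, D^[i] v₀ ∈ ⨆ i, W i := fun i =>
    Submodule.mem_iSup_of_mem i (Submodule.mem_span_singleton_self _)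
  have hstable : ∀ x ∈ ⨆ i, W i, D x ∈ ⨆ i, W i := by
    intro x hx
    refine Submodule.iSup_induction W (motive := fun x => D x ∈ ⨆ i, W i) hx ?_ (by simp)
      fun x y hx hy => by rw [map_add]; exact add_mem hx hy
    intro i x hx
    obtain ⟨f, rfl⟩ := Submodule.mem_span_singleton.mp hx
    rw [hD, ← Function.iterate_succ_apply' D]
    exact add_mem (Submodule.smul_mem _ _ (hW i)) (Submodule.smul_mem _ _ (hW (i + 1)))
  have htop : ⨆ i, W i = ⊤ := (hirr _ hstable).resolve_left fun h => hv₀ <| by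
    simpa [h] using hW 0
  obtain ⟨s, hs⟩ := CompleteLattice.IsCompactElement.exists_finset_of_le_iSup
    (α := Submodule (LaurentSeries K) V) ((Submodule.fg_iff_compact _).mp Module.Finite.fg_top) W
    htop.ge
  refine ⟨s.sup id, fun w => ?_⟩
  have hle : ⨆ i ∈ s, W i ≤ ⨆ i ∈ range (s.sup id + 1), W i :=
    biSup_mono fun i hi => mem_range.mpr (Nat.lt_succ_of_le (le_sup (f := id) hi))
  have hw := hle (hs (Submodule.mem_top (x := w)))
  obtain ⟨μ, hμ⟩ := (Submodule.mem_iSup_finset_iff_exists_sum W w).mp hw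
  choose g hg using fun i => Submodule.mem_span_singleton.mp (μ i).2
  exact ⟨g, by rw [← hμ]; simp only [hg]⟩

variable {m : ℕ} {e : ℕ → V} {b : ℕ → LaurentSeries K}

theorem map_sum_smul_of_companion (hD : IsConnection D) (he : ∀ i, e (i + 1) = D (e i))
    (hb : D (e m) = ∑ i ∈ range (m + 1), b i • e i) {f g : ℕ → LaurentSeries K}
    (h0 : lder (f 0) + b 0 * f m = g 0)
    (hsucc : ∀ i < m, f i = g (i + 1) - lder (f (i + 1)) - b (i + 1) * f m) :
    D (∑ i ∈ range (m + 1), f i • e i) = ∑ i ∈ range (m + 1), g i • e i := by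
  let r : ℕ → LaurentSeries K := fun i => g i - lder (f i) - b i * f m
  have hshift : ∑ i ∈ range m, f i • e (i + 1) = ∑ i ∈ range (m + 1), r i • e i := by
    rw [sum_range_succ' _ m, show r 0 = 0 by simp only [r, ← h0]; ring, zero_smul, add_zero]
    exact sum_congr rfl fun i hi => by rw [hsucc i (mem_range.mp hi)]
  calc D (∑ i ∈ range (m + 1), f i • e i)
      = ∑ i ∈ range (m + 1), (lder (f i) + b i * f m) • e i +
          ∑ i ∈ range m, f i • e (i + 1) := by
        rw [map_sum, sum_congr rfl fun i _ => hD (f i) (e i), sum_add_distrib,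
          sum_range_succ (fun i => f i • D (e i)), hb, smul_sum]
        simp only [← he, smul_smul, add_smul, sum_add_distrib, mul_comm (f m)]
        abel
    _ = ∑ i ∈ range (m + 1), g i • e i := by
        rw [hshift, ← sum_add_distrib]
        refine sum_congr rfl fun i _ => ?_
        rw [← add_smul]
        congr 1
        ring

theorem exists_sum_smul_mem_range [CharZero K] (hD : IsConnection D)
    (he : ∀ i, e (i + 1) = D (e i)) (hb : D (e m) = ∑ i ∈ range (m + 1), b i • e i) :
    ∃ N : ℤ, ∀ g : ℕ → LaurentSeries K, (∀ i ≤ m, g i ∈ orderTopGE N) →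
      ∑ i ∈ range (m + 1), g i • e i ∈ LinearMap.range D := by
  obtain ⟨N₀, hN₀⟩ :=
    ((isDiffOp_backSubst b m m).lder_add_mul (b 0)).exists_orderTopGE_subset_range
  refine ⟨N₀ + m + 1, fun g hg => ?_⟩
  have hu : g 0 - lder (backSubst g b m 0 m) ∈ orderTopGE N₀ := by
    refine sub_mem (orderTopGE_antitone (by omega) (hg 0 m.zero_le)) ?_
    convert lder_mem_orderTopGE (backSubst_zero_mem_orderTopGE hg b m) using 2
    ring
  obtain ⟨h, hh⟩ := hN₀ hu
  refine ⟨_, map_sum_smul_of_companion hD he hb (f := fun i => backSubst g b m h (m - i)) ?_ ?_⟩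
  · simp only [Nat.sub_zero, Nat.sub_self, backSubst]
    rw [backSubst_eq_add, lder_add, ← sub_eq_iff_eq_add.mpr hh.symm]
    ring
  · intro i hi
    obtain ⟨j, hj⟩ : ∃ j, m - i = j + 1 := ⟨m - i - 1, by omega⟩
    simp only [hj, backSubst, Nat.sub_self, show m - j = i + 1 by omega,
      show m - (i + 1) = j by omega]

end Connection

section Residue

open LaurentSeries

variable {K : Type*} [Field K] {V : Type*} [AddCommGroup V] [Module (LaurentSeries K) V]
  [Module K V]

/-- The vectors `w` for which `f ↦ φ (f • w)` is continuous, for the `t`-adic topology on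
`K⸨X⸩` and the discrete topology on `K`. -/
def continuousLocus (φ : V →ₗ[K] K) : Submodule (LaurentSeries K) V where
  carrier := {w | ∃ k : ℤ, ∀ f : LaurentSeries K, f ∈ orderTopGE k → φ (f • w) = 0}
  add_mem' := by
    rintro v w ⟨k, hk⟩ ⟨l, hl⟩
    refine ⟨max k l, fun f hf => ?_⟩
    rw [smul_add, map_add, hk f (orderTopGE_antitone (le_max_left k l) hf),
      hl f (orderTopGE_antitone (le_max_right k l) hf), add_zero]
  zero_mem' := ⟨0, fun f _ => by rw [smul_zero, map_zero]⟩
  smul_mem' := by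
    rintro g w ⟨k, hk⟩
    obtain ⟨a, ha⟩ := exists_mem_orderTopGE g
    refine ⟨k - a, fun f hf => ?_⟩
    rw [smul_smul]
    exact hk _ (by simpa using mul_mem_orderTopGE hf ha)

theorem mem_continuousLocus {φ : V →ₗ[K] K} {w : V} :
    w ∈ continuousLocus φ ↔ ∃ k : ℤ, ∀ f : LaurentSeries K, f ∈ orderTopGE k → φ (f • w) = 0 :=
  Iff.rfl

variable (φ : V →ₗ[K] K) (hφ : continuousLocus φ = ⊤)

/-- The `K⸨X⸩`-linear lift of `φ` along the residue map `coeff (-1)`. -/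
noncomputable def residueSeries (w : V) : LaurentSeries K :=
  ofSuppBddBelow (fun n => φ (single (-n - 1) (1 : K) • w)) <| by
    obtain ⟨k, hk⟩ := mem_continuousLocus.mp (hφ ▸ Submodule.mem_top : w ∈ continuousLocus φ)
    exact ⟨-k, fun n hn => not_lt.mp fun h => hn (hk _ (single_mem_orderTopGE (by omega) 1))⟩

@[simp]
theorem coeff_residueSeries (w : V) (n : ℤ) :
    (residueSeries φ hφ w).coeff n = φ (single (-n - 1) (1 : K) • w) :=
  rfl

theorem residueSeries_mem_orderTopGE {w : V} {k : ℤ}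
    (hk : ∀ f : LaurentSeries K, f ∈ orderTopGE k → φ (f • w) = 0) :
    residueSeries φ hφ w ∈ orderTopGE (-k) :=
  mem_orderTopGE_iff_forall.mpr fun n hn => hk _ (single_mem_orderTopGE (by omega) 1)

theorem residueSeries_add (v w : V) :
    residueSeries φ hφ (v + w) = residueSeries φ hφ v + residueSeries φ hφ w := by
  ext n
  simp [smul_add]

variable [IsScalarTower K (LaurentSeries K) V]

theorem map_single_smul (j : ℤ) (a : K) (w : V) :
    φ (single j a • w) = a * φ (single j (1 : K) • w) := by
  have : (single j a : LaurentSeries K) = a • single j (1 : K) := by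
    ext m
    by_cases hm : m = j <;> simp [hm]
  rw [this, smul_assoc, map_smul, smul_eq_mul]

theorem residueSeries_single_smul (j : ℤ) (a : K) (w : V) :
    residueSeries φ hφ (single j a • w) = single j a * residueSeries φ hφ w := by
  ext n
  rw [coeff_residueSeries, smul_smul, single_mul_single, one_mul, map_single_smul,
    ← sub_add_cancel n j, coeff_single_mul_add, coeff_residueSeries, sub_add_cancel,
    show -(n - j) - 1 = -n - 1 + j by ring]

/-- `φ` is continuous, so `residueSeries` commutes with multiplication by all Laurent series
once it does with Laurent polynomials. -/
theorem residueSeries_smul (f : LaurentSeries K) (w : V) :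
    residueSeries φ hφ (f • w) = f * residueSeries φ hφ w := by
  ext n
  obtain ⟨k, hk⟩ := mem_continuousLocus.mp (hφ ▸ Submodule.mem_top : w ∈ continuousLocus φ)
  obtain ⟨a, ha⟩ := exists_mem_orderTopGE f
  have htail := sub_truncLT_mem_orderTopGE f (n + 1 + k)
  have hsplit : f = ∑ j ∈ Finset.Ico a (n + 1 + k), single j (f.coeff j) +
      (f - truncLT (n + 1 + k) f) := by
    rw [← truncLT_eq_sum_single ha, add_sub_cancel]
  have hsum : ∀ {ι : Type} (s : Finset ι) (v : ι → V),
      residueSeries φ hφ (∑ i ∈ s, v i) = ∑ i ∈ s, residueSeries φ hφ (v i) :=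
    fun s v => map_sum (AddMonoidHom.mk' (residueSeries φ hφ) (residueSeries_add φ hφ)) v s
  rw [hsplit, add_smul, residueSeries_add, add_mul, coeff_add, coeff_add, Finset.sum_smul,
    Finset.sum_mul, hsum]
  simp only [residueSeries_single_smul]
  have hdeep : single (-n - 1) (1 : K) * (f - truncLT (n + 1 + k) f) ∈ orderTopGE k := by
    convert mul_mem_orderTopGE (single_mem_orderTopGE le_rfl (1 : K)) htail using 2
    ring
  congr 1
  rw [coeff_residueSeries, smul_smul, hk _ hdeep, coeff_eq_zero_of_mem_orderTopGE
    (mul_mem_orderTopGE htail (residueSeries_mem_orderTopGE φ hφ hk)) (by omega)]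

noncomputable def residueLift : V →ₗ[LaurentSeries K] LaurentSeries K where
  toFun := residueSeries φ hφ
  map_add' := residueSeries_add φ hφ
  map_smul' := residueSeries_smul φ hφ

theorem coeff_neg_one_residueLift (w : V) : (residueLift φ hφ w).coeff (-1) = φ w := by
  simp [residueLift]

theorem residueLift_map_eq_lder {D : V →ₗ[K] V} (hD : IsConnection D) (hφD : ∀ v, φ (D v) = 0)
    (w : V) : residueLift φ hφ (D w) = lder (residueLift φ hφ w) := by
  ext n
  have h := hφD (single (-n - 1) (1 : K) • w)
  rw [hD, map_add, lder_single, map_single_smul] at h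
  simp only [residueLift, LinearMap.coe_mk, AddHom.coe_mk, coeff_residueSeries, lder_coeff]
  rw [show -(n + 1) - 1 = -n - 1 - 1 by ring, zsmul_eq_mul]
  push_cast at h ⊢
  linear_combination h

end Residue

section Main

open LaurentSeries Finset

variable {K : Type*} [Field K] {V : Type*} [AddCommGroup V] [Module (LaurentSeries K) V]
  [Module K V]

/-- Since `range D` contains a lattice, the functional `φ` separating `w₀` from `range D` is
`t`-adically continuous. -/
theorem exists_continuous_functional_of_notMem_range [CharZero K]
    [Module.Finite (LaurentSeries K) V] {D : V →ₗ[K] V} (hD : IsConnection D) (hirr : IsIrreducibleFor D) {w₀ : V}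
    (hw₀ : w₀ ∉ LinearMap.range D) :
    ∃ φ : V →ₗ[K] K, continuousLocus φ = ⊤ ∧ (∀ v, φ (D v) = 0) ∧ φ w₀ ≠ 0 := by
  have hw₀_ne : w₀ ≠ 0 := fun h => hw₀ (h ▸ zero_mem _)
  obtain ⟨m, hspan⟩ := exists_span_iterate hD hirr hw₀_ne
  obtain ⟨b, hb⟩ := hspan (D (D^[m] w₀))
  obtain ⟨N, hN⟩ := exists_sum_smul_mem_range hD (e := fun i => D^[i] w₀)
    (fun i => Function.iterate_succ_apply' D i w₀) hb
  obtain ⟨φ, hφw₀, hφD⟩ := Submodule.exists_dual_map_eq_bot_of_notMem hw₀ inferInstance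
  have hφrange : ∀ v, φ (D v) = 0 := fun v =>
    (Submodule.mem_bot K).mp (hφD ▸ Submodule.mem_map_of_mem (LinearMap.mem_range_self D v))
  refine ⟨φ, eq_top_iff.mpr fun w _ => ?_, hφrange, hφw₀⟩
  obtain ⟨g, rfl⟩ := hspan w
  refine sum_mem fun i hi => Submodule.smul_mem _ _ ⟨N, fun f hf => ?_⟩
  obtain ⟨v, hv⟩ := hN (fun j => if j = i then f else 0) fun j _ => by
    split_ifs
    exacts [hf, zero_mem _]
  rw [show f • D^[i] w₀ = D v by simp [hv, ite_smul, hi], hφrange]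

end Main

theorem irreducible_connection_not_bijective_is_trivial_general
    (K : Type*) [Field K] [CharZero K]
    (V : Type*) [AddCommGroup V] [Module (LaurentSeries K) V]
    [Module.Finite (LaurentSeries K) V]
    [Module K V] [IsScalarTower K (LaurentSeries K) V]
    (D : V →ₗ[K] V)
    (hD : ∀ (f : LaurentSeries K) (v : V), D (f • v) = lder f • v + f • D v)
    (hirr : ∀ W : Submodule (LaurentSeries K) V,
      (∀ v ∈ W, D v ∈ W) → W = ⊥ ∨ W = ⊤)
    (hnotbij : ¬ Function.Bijective D) :
    ∃ e : V, e ≠ 0 ∧ D e = 0 ∧ ∀ v : V, ∃ f : LaurentSeries K, v = f • e := by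
  by_cases hker : ∃ v : V, v ≠ 0 ∧ D v = 0
  · obtain ⟨v, hv, hDv⟩ := hker
    exact ⟨v, hv, hDv, exists_eq_smul_of_horizontal hD hirr hv hDv⟩
  have hinj : Function.Injective D := (injective_iff_map_eq_zero D).mpr fun v hDv =>
    by_contra fun hv => hker ⟨v, hv, hDv⟩
  obtain ⟨w₀, hw₀⟩ : ∃ w₀, w₀ ∉ LinearMap.range D := by
    by_contra! hsurj
    exact hnotbij ⟨hinj, fun w => hsurj w⟩
  obtain ⟨φ, hφ, hφD, hφw₀⟩ := exists_continuous_functional_of_notMem_range hD hirr hw₀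
  refine exists_horizontal_generator hirr (residueLift φ hφ) (fun h => hφw₀ ?_)
    (residueLift_map_eq_lder φ hφ hD hφD)
  rw [← coeff_neg_one_residueLift φ hφ w₀, h, LinearMap.zero_apply, coeff_zero]

/-- An irreducible connection over `K((t))` whose underlying operator `D : V → V` is
not bijective is isomorphic to the trivial rank-one connection: `V` has a basis
vector `e` with `D e = 0`.  Equivalently, a nontrivial irreducible connection has
vanishing de Rham cohomology. -/
theorem irreducible_connection_not_bijective_is_trivial
    (K : Type*) [Field K] [CharZero K]
    (V : Type*) [AddCommGroup V] [Module (LaurentSeries K) V]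
    [Module.Finite (LaurentSeries K) V]
    [Module K V] [IsScalarTower K (LaurentSeries K) V]
    (D : V →ₗ[K] V)
    (hD : ∀ (f : LaurentSeries K) (v : V), D (f • v) = lder f • v + f • D v)
    (hnontriv : Nontrivial V)
    (hirr : ∀ W : Submodule (LaurentSeries K) V,
      (∀ v ∈ W, D v ∈ W) → W = ⊥ ∨ W = ⊤)
    (hnotbij : ¬ Function.Bijective D) :
    ∃ e : V, e ≠ 0 ∧ D e = 0 ∧ ∀ v : V, ∃ f : LaurentSeries K, v = f • e :=
  irreducible_connection_not_bijective_is_trivial_general K V D hD hirr hnotbij
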